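/- arXiv:2004.02870 — 2 statements merged into one kernel-verified Lean document; each statement's English description precedes it below -/
import Mathlib

section
/- Any greedy schedule of a DAG with total work W (number of vertices) and span S (length in vertices of the longest directed path) on P processors completes in at most W/P + S time steps (Brent-type bound): if at every step the schedule executes min(P, number of ready vertices) vertices, then the total number of steps T satisfies T ≤ W/P + (P-1)S/P, hence T ≤ ⌈W/P⌉ + S. -/
/-!
Every step of a greedy schedule runs at least one vertex, and a step running fewer than `P`
vertices runs every ready vertex. After such a step, the first vertex of any path of pending
vertices has a pending immediate predecessor, so the longest pending path was one vertex longer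
before the step. Reading the schedule backwards, the unsaturated steps therefore yield a path
with at least as many vertices as there are such steps, so there are at most `Sp` of them. Each
saturated step runs `P` vertices and each unsaturated one at least one, which gives
`P * T ≤ W + (P - 1) * Sp`.
-/

open Finset Relation

namespace GreedySchedule

variable {V : Type*} {edge : V → V → Prop} {S : ℕ → Finset V} {P t : ℕ}

def executed (S : ℕ → Finset V) (t : ℕ) : Set V := {v | ∃ t' < t, v ∈ S t'}

def ready (edge : V → V → Prop) (S : ℕ → Finset V) (t : ℕ) : Set V :=
  {v | (∀ u, TransGen edge u v → u ∈ executed S t) ∧ v ∉ executed S t}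

lemma executed_subset_succ : executed S t ⊆ executed S (t + 1) :=
  fun _ ⟨t', ht', hv⟩ => ⟨t', ht'.trans t.lt_succ_self, hv⟩

lemma coe_subset_ready (hdisj : ∀ t t', t ≠ t' → Disjoint (S t) (S t'))
    (hdep : ∀ t v, v ∈ S t → ∀ u, TransGen edge u v → ∃ t' < t, u ∈ S t') :
    ↑(S t) ⊆ ready edge S t :=
  fun v hv => ⟨hdep t v hv, fun ⟨t', ht', hv'⟩ => disjoint_left.mp (hdisj t' t ht'.ne) hv' hv⟩

lemma ready_nonempty [Finite V] (hacyc : ∀ v : V, ¬ TransGen edge v v)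
    (hpending : (executed S t)ᶜ.Nonempty) : (ready edge S t).Nonempty := by
  have : Std.Irrefl (TransGen edge) := ⟨hacyc⟩
  obtain ⟨u, hu, hmin⟩ :=
    (Finite.wellFounded_of_trans_of_irrefl (TransGen edge)).has_min _ hpending
  exact ⟨u, fun w hw => not_not.mp fun h => hmin w h hw, hu⟩

lemma coe_eq_ready_of_card_lt [Finite V] (hsub : ↑(S t) ⊆ ready edge S t)
    (hgreedy : (S t).card = min P (ready edge S t).ncard) (hlt : (S t).card < P) :
    ↑(S t) = ready edge S t := by
  refine Set.eq_of_subset_of_ncard_le hsub ?_ (Set.toFinite _)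
  rw [Set.ncard_coe_finset, hgreedy]
  omega

/-- The last vertex before `v` on a path from a pending ancestor `u` cannot have run before `u`. -/
lemma exists_pending_pred
    (hdep : ∀ t v, v ∈ S t → ∀ u, TransGen edge u v → ∃ t' < t, u ∈ S t') {v : V}
    (hv : v ∉ executed S t) (hnready : v ∉ ready edge S t) :
    ∃ w, edge w v ∧ w ∉ executed S t := by
  obtain ⟨u, huv, hu⟩ : ∃ u, TransGen edge u v ∧ u ∉ executed S t := by
    by_contra! h
    exact hnready ⟨h, hv⟩
  obtain ⟨w, huw, hwv⟩ := TransGen.tail'_iff.mp huv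
  refine ⟨w, hwv, ?_⟩
  rcases reflTransGen_iff_eq_or_transGen.mp huw with rfl | huw
  · exact hu
  · rintro ⟨t', ht', hw⟩
    obtain ⟨t'', ht'', hu'⟩ := hdep t' w hw u huw
    exact hu ⟨t'', ht''.trans ht', hu'⟩

lemma exists_chain_cons_of_ready_subset
    (hdep : ∀ t v, v ∈ S t → ∀ u, TransGen edge u v → ∃ t' < t, u ∈ S t')
    (hready : ready edge S t ⊆ ↑(S t)) (hpending : (executed S t)ᶜ.Nonempty)
    {l : List V} (hl : l.IsChain edge) (hlpending : ∀ v ∈ l, v ∉ executed S (t + 1)) :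
    ∃ l' : List V, l'.IsChain edge ∧ (∀ v ∈ l', v ∉ executed S t) ∧ l'.length = l.length + 1 := by
  cases l with
  | nil =>
    obtain ⟨u, hu⟩ := hpending
    exact ⟨[u], List.isChain_singleton u, by simpa using hu, rfl⟩
  | cons v l =>
    have hv : v ∉ executed S (t + 1) := hlpending v List.mem_cons_self
    have hvS : v ∉ S t := fun h => hv ⟨t, t.lt_succ_self, h⟩
    obtain ⟨w, hwv, hw⟩ :=
      exists_pending_pred hdep (fun h => hv (executed_subset_succ h)) (fun h => hvS (hready h))
    refine ⟨w :: v :: l, hl.cons_cons hwv, ?_, rfl⟩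
    rintro x (_ | ⟨_, hx⟩)
    · exact hw
    · exact fun h => hlpending x hx (executed_subset_succ h)

lemma exists_chain_card_filter_card_lt_le [Finite V]
    (hdisj : ∀ t t', t ≠ t' → Disjoint (S t) (S t'))
    (hdep : ∀ t v, v ∈ S t → ∀ u, TransGen edge u v → ∃ t' < t, u ∈ S t')
    (hgreedy : ∀ t, (S t).card = min P (ready edge S t).ncard)
    {T : ℕ} (hpending : ∀ t < T, (executed S t)ᶜ.Nonempty) (ht : t ≤ T) :
    ∃ l : List V, l.IsChain edge ∧ (∀ v ∈ l, v ∉ executed S t) ∧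
      #{s ∈ Ico t T | (S s).card < P} ≤ l.length := by
  induction ht using Nat.decreasingInduction with
  | self => exact ⟨[], List.isChain_nil, by simp, by simp⟩
  | of_succ t ht ih =>
    obtain ⟨l, hl, hlpending, hcount⟩ := ih
    rw [← insert_Ico_add_one_left_eq_Ico ht, filter_insert]
    by_cases hlt : (S t).card < P
    · have hready := (coe_eq_ready_of_card_lt (coe_subset_ready hdisj hdep) (hgreedy t) hlt).ge
      obtain ⟨l', hl', hl'pending, hlen⟩ :=
        exists_chain_cons_of_ready_subset hdep hready (hpending t ht) hl hlpending
      refine ⟨l', hl', hl'pending, ?_⟩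
      rw [if_pos hlt, hlen]
      exact (card_insert_le _ _).trans (by omega)
    · rw [if_neg hlt]
      exact ⟨l, hl, fun v hv h => hlpending v hv (executed_subset_succ h), hcount⟩

lemma sum_card_le_card [Fintype V] (hdisj : ∀ t t', t ≠ t' → Disjoint (S t) (S t')) (T : ℕ) :
    ∑ t ∈ range T, (S t).card ≤ Fintype.card V := by
  rw [← card_disjiUnion _ _ fun t _ t' _ h => hdisj t t' h]
  exact card_le_univ _

end GreedySchedule

lemma Nat.mul_le_sum_add_mul_card_filter_lt {f : ℕ → ℕ} {P T : ℕ} (hpos : ∀ t < T, 1 ≤ f t)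
    (hle : ∀ t, f t ≤ P) :
    P * T ≤ ∑ t ∈ range T, f t + (P - 1) * #{t ∈ range T | f t < P} := by
  rw [card_filter, mul_sum, ← sum_add_distrib, mul_comm, ← smul_eq_mul,
    ← card_range T, ← sum_const, card_range]
  refine sum_le_sum fun t ht => ?_
  have := hpos t (mem_range.mp ht)
  have := hle t
  split_ifs <;> omega

lemma Nat.le_add_div_add_of_mul_le {P T W Sp : ℕ} (hP : 0 < P) (h : P * T ≤ W + (P - 1) * Sp) :
    T ≤ (W + P - 1) / P + Sp := by
  rcases le_or_gt T Sp with hT | hT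
  · exact hT.trans (Nat.le_add_left _ _)
  obtain ⟨k, rfl⟩ := Nat.exists_eq_add_of_lt hT
  have hk : (k + 1) * P ≤ W := by
    obtain ⟨Q, rfl⟩ := Nat.exists_eq_add_one_of_ne_zero hP.ne'
    simp only [add_tsub_cancel_right] at h
    nlinarith
  have := (Nat.le_div_iff_mul_le hP).mpr (hk.trans (by omega : W ≤ W + P - 1))
  omega

open GreedySchedule in
theorem stmt_3_general {V : Type*} [Fintype V] (edge : V → V → Prop)
    (hacyc : ∀ v : V, ¬ Relation.TransGen edge v v)
    (P : ℕ) (hP : 0 < P) (S : ℕ → Finset V) (T W Sp : ℕ)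
    (hW : W = Fintype.card V)
    -- `Sp` is the maximum number of vertices on any directed path
    (hSpmax : ∀ l : List V, List.Chain' edge l → l.length ≤ Sp)
    (hdisj : ∀ t t', t ≠ t' → Disjoint (S t) (S t'))
    (hdep : ∀ t v, v ∈ S t → ∀ u, Relation.TransGen edge u v → ∃ t' < t, u ∈ S t')
    -- greedy: at each step, execute `min P r` ready vertices
    (hgreedy : ∀ t, (S t).card =
      min P (Set.ncard {v : V |
        (∀ u, Relation.TransGen edge u v → ∃ t' < t, u ∈ S t') ∧ ¬ ∃ t' < t, v ∈ S t'}))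
    (hTmin : ∀ T' < T, ∃ v : V, ∀ t < T', v ∉ S t) :
    P * T ≤ W + (P - 1) * Sp ∧ T ≤ (W + P - 1) / P + Sp := by
  have hgreedy : ∀ t, (S t).card = min P (ready edge S t).ncard := hgreedy
  have hpending : ∀ t < T, (executed S t)ᶜ.Nonempty := fun t ht =>
    (hTmin t ht).imp fun v hv ⟨t', ht', h⟩ => hv t' ht' h
  have hpos : ∀ t < T, 1 ≤ (S t).card := fun t ht => by
    rw [hgreedy t]
    exact le_min hP <| (Set.ncard_pos (Set.toFinite _)).mpr <| ready_nonempty hacyc (hpending t ht)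
  have hunsaturated : #{t ∈ range T | (S t).card < P} ≤ Sp := by
    obtain ⟨l, hl, -, hcount⟩ :=
      exists_chain_card_filter_card_lt_le hdisj hdep hgreedy hpending T.zero_le
    rw [range_eq_Ico]
    exact hcount.trans (hSpmax l hl)
  have hmain : P * T ≤ W + (P - 1) * Sp := calc
    P * T ≤ ∑ t ∈ range T, (S t).card + (P - 1) * #{t ∈ range T | (S t).card < P} :=
      Nat.mul_le_sum_add_mul_card_filter_lt hpos fun t => (hgreedy t).trans_le (min_le_left _ _)
    _ ≤ W + (P - 1) * Sp :=
      hW ▸ add_le_add (sum_card_le_card hdisj T) (Nat.mul_le_mul_left _ hunsaturated)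
  exact ⟨hmain, Nat.le_add_div_add_of_mul_le hP hmain⟩

/-- Brent-type bound: any greedy schedule of a DAG with work `W` (number of
vertices) and span `Sp` (maximum number of vertices on a directed path) on `P`
processors completes in `T` steps with `P*T ≤ W + (P-1)*Sp`, hence
`T ≤ ⌈W/P⌉ + Sp`. -/
theorem stmt_3 {V : Type*} [Fintype V] [DecidableEq V] (edge : V → V → Prop)
    (hacyc : ∀ v : V, ¬ Relation.TransGen edge v v)
    (P : ℕ) (hP : 0 < P) (S : ℕ → Finset V) (T W Sp : ℕ)
    (hW : W = Fintype.card V)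
    -- `Sp` is the maximum number of vertices on any directed path
    (hSpmax : ∀ l : List V, List.Chain' edge l → l.length ≤ Sp)
    (hSpwit : ∃ l : List V, List.Chain' edge l ∧ l.length = Sp)
    (hdisj : ∀ t t', t ≠ t' → Disjoint (S t) (S t'))
    (hdep : ∀ t v, v ∈ S t → ∀ u, Relation.TransGen edge u v → ∃ t' < t, u ∈ S t')
    -- greedy: at each step, execute `min P r` ready vertices
    (hgreedy : ∀ t, (S t).card =
      min P (Set.ncard {v : V |
        (∀ u, Relation.TransGen edge u v → ∃ t' < t, u ∈ S t') ∧ ¬ ∃ t' < t, v ∈ S t'}))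
    -- the schedule completes in exactly `T` steps
    (hT : ∀ v : V, ∃ t < T, v ∈ S t)
    (hTmin : ∀ T' < T, ∃ v : V, ∀ t < T', v ∉ S t) :
    P * T ≤ W + (P - 1) * Sp ∧ T ≤ (W + P - 1) / P + Sp :=
  stmt_3_general edge hacyc P hP S T W Sp hW hSpmax hdisj hdep hgreedy hTmin
end

section
/- Strengthening preserves readiness (Lemma on a-strengthening): let g be a well-formed DAG with weak edges and let g' = strengthen_a(g) be obtained by removing each strong edge (u0,u) with target on a strong path to the end vertex t of thread a whose priorities are inverted, replacing it with an edge (u',u) where u0 weakly precedes u' and u' strongly precedes t. Then in any admissible schedule (one in which for every weak edge (v,w), v is executed before w), whenever a vertex u is ready in g' at some step, u is also ready in g at that step. -/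
/-- Strengthening preserves readiness: let `g` have strong and weak edges and
let `g'` (with strong edges `strong'`) be its `a`-strengthening, i.e. every
strong edge `(u0,u)` of `g` that is removed is replaced by a strong edge
`(u',u)` where there is a weak path from `u0` to `u'` in `g` and a strong path
from `u'` to `t` in `g'`.  In any admissible schedule (given by execution times
`exec` in which every edge of `g`, strong or weak, goes from earlier to later),
whenever a vertex `u` is ready in `g'` at some step `j` (all its strong parents
in `g'` executed before `j`), `u` is also ready in `g` at step `j`. -/
theorem stmt_4 {V : Type*} (strong weak strong' : V → V → Prop) (t : V)
    (exec : V → ℕ)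
    -- the schedule obeys the (strong) dependences of `g`
    (hvalid : ∀ u v, strong u v → exec u < exec v)
    -- the schedule is admissible: weak-edge sources execute strictly earlier
    (hadm : ∀ u v, weak u v → exec u < exec v)
    -- `strong'` arises from `strong` by the strengthening construction:
    -- every removed strong edge `(u0,u)` is replaced by `(u',u)` with a weak
    -- path from `u0` to `u'` and a strong path from `u'` to `t`
    (hstrengthen : ∀ u0 u, strong u0 u → ¬ strong' u0 u →
      ∃ u', strong' u' u ∧
        (∃ x y, Relation.ReflTransGen (fun p q => strong p q ∨ weak p q) u0 x ∧
          weak x y ∧ Relation.ReflTransGen (fun p q => strong p q ∨ weak p q) y u') ∧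
        Relation.ReflTransGen strong' u' t) :
    ∀ (j : ℕ) (u : V), (∀ v, strong' v u → exec v < j) → (∀ v, strong v u → exec v < j) := by
  intro j u h v hv
  by_cases h' : strong' v u
  · exact h v h'
  · obtain ⟨u', hu'u, ⟨x, y, hx, hxy, hy⟩, _⟩ := hstrengthen v u hv h'
    have mono : ∀ {a b : V}, Relation.ReflTransGen (fun p q => strong p q ∨ weak p q) a b →
        exec a ≤ exec b := by
      intro a b hab
      induction hab with
      | refl => exact le_rfl
      | tail _ hbc ih => exact ih.trans (le_of_lt (hbc.elim (hvalid _ _) (hadm _ _)))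
    have : exec v < exec u' :=
      lt_of_le_of_lt (mono hx) (lt_of_lt_of_le (hadm _ _ hxy) (mono hy))
    exact this.trans (h u' hu'u)
end
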